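/- arXiv:0810.0407 — 2 statements merged into one kernel-verified Lean document; each statement's English description precedes it below -/
import Mathlib

section
/- For every F-type icosahedral model set Λ = Λ(t,W), the set of Λ-directions coincides with the set of L-directions: a direction u ∈ S² is parallel to a nonzero difference of two points of Λ if and only if u is parallel to some nonzero element of L. -/
noncomputable section

open Set

/-- The golden ratio τ = (1+√5)/2. -/
def gold : ℝ := (1 + Real.sqrt 5) / 2

/-- Euclidean 3-space. -/
abbrev E3 := EuclideanSpace ℝ (Fin 3)

/-- Membership in ℚ(τ) ⊂ ℝ. -/
def inQtau (x : ℝ) : Prop := ∃ p q : ℚ, x = (p : ℝ) + (q : ℝ) * gold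

open Classical in
/-- The Galois conjugation on ℚ(τ) ⊂ ℝ, determined by √5 ↦ -√5, i.e. τ ↦ 1-τ
(extended by 0 outside ℚ(τ)). -/
def conjTau (x : ℝ) : ℝ :=
  if h : ∃ p q : ℚ, x = (p : ℝ) + (q : ℝ) * gold then
    ((Classical.choose h : ℚ) : ℝ) +
      ((Classical.choose (Classical.choose_spec h) : ℚ) : ℝ) * (1 - gold)
  else 0

/-- The ring ℤ[τ] = ℤ ⊕ ℤτ ⊂ ℝ. -/
def Ztau : Set ℝ := {x | ∃ m n : ℤ, x = (m : ℝ) + (n : ℝ) * gold}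

/-- The standard face-centred icosahedral module M_F. -/
def MF : Set E3 :=
  {v | ∃ a b c : ℝ, a ∈ Ztau ∧ b ∈ Ztau ∧ c ∈ Ztau ∧
    v = a • (WithLp.toLp 2 ![2, 0, 0] : E3) + b • (WithLp.toLp 2 ![gold + 1, gold, 1] : E3) +
      c • (WithLp.toLp 2 ![0, 0, 2] : E3)}

/-- L := (1/2)·M_F. -/
def Lset : Set E3 := {v | (2 : ℝ) • v ∈ MF}

/-- The star map: coordinatewise Galois conjugation. -/
def starMap (v : E3) : E3 := WithLp.toLp 2 (fun i => conjTau (v i) : Fin 3 → ℝ)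

/-- A window: ∅ ≠ int W ⊆ W ⊆ cl(int W) with cl(int W) compact. -/
def IsWindow (W : Set E3) : Prop :=
  (interior W).Nonempty ∧ W ⊆ closure (interior W) ∧ IsCompact (closure (interior W))

/-- The F-type icosahedral model set Λ(t,W). -/
def modelSet (t : E3) (W : Set E3) : Set E3 :=
  {x | ∃ α ∈ Lset, starMap α ∈ W ∧ x = t + α}

/-- Genericity of the window: ∂W ∩ L* = ∅. -/
def IsGeneric (W : Set E3) : Prop := frontier W ∩ (starMap '' Lset) = ∅

/-- The line through p in direction u. -/
def lineThrough (p u : E3) : Set E3 := {x | ∃ r : ℝ, x = p + r • u}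

/-- An L-direction: a unit vector parallel to a nonzero element of L. -/
def IsLDir (u : E3) : Prop :=
  u ∈ Metric.sphere (0 : E3) 1 ∧ ∃ v ∈ Lset, v ≠ 0 ∧ ∃ c : ℝ, u = c • v

/-- An L^{(τ,0,1)}-direction: an L-direction orthogonal to (τ,0,1). -/
def IsLTauDir (u : E3) : Prop :=
  IsLDir u ∧ gold * u 0 + u 2 = 0

/-- A set of pairwise non-parallel directions. -/
def PairwiseNonParallel (U : Set E3) : Prop :=
  U.Pairwise fun u v => ¬ ∃ c : ℝ, u = c • v

/-- Two finite sets have the same X-ray in direction u. -/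
def XRayEq (F G : Set E3) (u : E3) : Prop :=
  ∀ p : E3, (F ∩ lineThrough p u).ncard = (G ∩ lineThrough p u).ncard

/-- C is a (finite) convex subset of Λ, i.e. C = conv(C) ∩ Λ. -/
def ConvexSubset (Λ C : Set E3) : Prop :=
  C.Finite ∧ C ⊆ Λ ∧ C = convexHull ℝ C ∩ Λ

/-- A collection of finite sets is determined by the X-rays in the directions of U. -/
def DeterminedBy (𝒞 : Set (Set E3)) (U : Set E3) : Prop :=
  ∀ F₁ ∈ 𝒞, ∀ F₂ ∈ 𝒞, (∀ u ∈ U, XRayEq F₁ F₂ u) → F₁ = F₂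


-- ==================== auxiliary development ====================

lemma gold_irr : Irrational gold := Real.goldenRatio_irrational

lemma gold_sq' : gold ^ 2 = gold + 1 := by
  have h5 : Real.sqrt 5 ^ 2 = 5 := Real.sq_sqrt (by norm_num)
  unfold gold
  field_simp
  linarith [h5]

lemma sqrt5_lt : Real.sqrt 5 < 3 := by
  nlinarith [Real.sq_sqrt (show (0:ℝ) ≤ 5 by norm_num), Real.sqrt_nonneg 5]

lemma sqrt5_gt : (1:ℝ) < Real.sqrt 5 := by
  nlinarith [Real.sq_sqrt (show (0:ℝ) ≤ 5 by norm_num), Real.sqrt_nonneg 5]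

lemma goldGtOne : 1 < gold := by unfold gold; linarith [sqrt5_gt]
lemma goldLtTwo : gold < 2 := by unfold gold; linarith [sqrt5_lt]
lemma goldPos : 0 < gold := lt_trans one_pos goldGtOne

lemma repr_unique {p q p' q' : ℚ} (h : (p:ℝ) + q * gold = (p':ℝ) + q' * gold) :
    p = p' ∧ q = q' := by
  have hq : q = q' := by
    by_contra hne
    have h5 : (q:ℝ) - q' ≠ 0 := by
      intro h0
      exact hne (by exact_mod_cast sub_eq_zero.mp h0)
    have : gold = (((p' - p) / (q - q') : ℚ) : ℝ) := by
      push_cast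
      field_simp
      linarith
    exact gold_irr.ne_rat _ this
  refine ⟨?_, hq⟩
  have : (p:ℝ) = p' := by rw [hq] at h; linarith
  exact_mod_cast this

lemma conjTau_eq (p q : ℚ) : conjTau ((p:ℝ) + q * gold) = (p:ℝ) + q * (1 - gold) := by
  have h : ∃ p' q' : ℚ, ((p:ℝ) + q * gold) = (p':ℝ) + (q':ℝ) * gold := ⟨p, q, rfl⟩
  rw [conjTau, dif_pos h]
  have hs : ((p:ℝ) + q * gold) =
      ((Classical.choose h : ℚ) : ℝ) +
        ((Classical.choose (Classical.choose_spec h) : ℚ) : ℝ) * gold :=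
    Classical.choose_spec (Classical.choose_spec h)
  obtain ⟨hp, hq⟩ := repr_unique hs
  have hp' : ((Classical.choose h : ℚ) : ℝ) = (p:ℝ) := by exact_mod_cast hp.symm
  have hq' : ((Classical.choose (Classical.choose_spec h) : ℚ) : ℝ) = (q:ℝ) := by
    exact_mod_cast hq.symm
  linear_combination hp' + (1 - gold) * hq'

/-- The subgroup ℤ + ℤξ of ℝ. -/
def pairSubgroup (ξ : ℝ) : AddSubgroup ℝ where
  carrier := {y | ∃ m n : ℤ, y = (m:ℝ) + n * ξ}
  zero_mem' := ⟨0, 0, by simp⟩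
  add_mem' := by
    rintro a b ⟨m, n, rfl⟩ ⟨m', n', rfl⟩
    exact ⟨m + m', n + n', by push_cast; ring⟩
  neg_mem' := by
    rintro a ⟨m, n, rfl⟩
    exact ⟨-m, -n, by push_cast; ring⟩

lemma dense_pair {ξ : ℝ} (hξ : Irrational ξ) (x ε : ℝ) (hε : 0 < ε) :
    ∃ m n : ℤ, |((m:ℝ) + n * ξ) - x| < ε := by
  rcases (pairSubgroup ξ).dense_or_cyclic with hd | ⟨a, ha⟩
  · obtain ⟨y, hy, hyx⟩ := Metric.mem_closure_iff.mp (hd x) ε hε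
    obtain ⟨m, n, rfl⟩ := hy
    exact ⟨m, n, by rwa [abs_sub_comm, ← Real.dist_eq]⟩
  · exfalso
    have h1 : (1:ℝ) ∈ pairSubgroup ξ := ⟨1, 0, by simp⟩
    have h2 : ξ ∈ pairSubgroup ξ := ⟨0, 1, by simp⟩
    rw [ha, AddSubgroup.mem_closure_singleton] at h1 h2
    obtain ⟨k, hk⟩ := h1
    obtain ⟨l, hl⟩ := h2
    have hk0 : (k:ℝ) ≠ 0 := by
      intro h0
      rw [zsmul_eq_mul, h0, zero_mul] at hk
      exact one_ne_zero hk.symm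
    rw [zsmul_eq_mul] at hk hl
    have hxi : ξ = (l : ℝ) / (k : ℝ) := by
      rw [eq_div_iff hk0, ← hl]
      calc (l:ℝ) * a * k = (l:ℝ) * (k * a) := by ring
        _ = l := by rw [hk]; ring
    apply hξ.ne_rat ((l : ℚ) / (k : ℚ))
    rw [hxi]
    push_cast
    ring

-- ============ the L lattice machinery ============

def lv (a b c : ℝ) : E3 :=
  (a/2) • (WithLp.toLp 2 ![2, 0, 0] : E3) + (b/2) • (WithLp.toLp 2 ![gold + 1, gold, 1] : E3) + (c/2) • (WithLp.toLp 2 ![0, 0, 2] : E3)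

def lvS (a b c : ℝ) : E3 :=
  (a/2) • (WithLp.toLp 2 ![2, 0, 0] : E3) + (b/2) • (WithLp.toLp 2 ![2 - gold, 1 - gold, 1] : E3) + (c/2) • (WithLp.toLp 2 ![0, 0, 2] : E3)

def zt (m n : ℤ) : ℝ := (m:ℝ) + (n:ℝ) * gold
def zs (m n : ℤ) : ℝ := (m:ℝ) + (n:ℝ) * (1 - gold)

lemma lv_mem (ma na mb nb mc nc : ℤ) : lv (zt ma na) (zt mb nb) (zt mc nc) ∈ Lset := by
  refine ⟨zt ma na, zt mb nb, zt mc nc, ⟨ma, na, rfl⟩, ⟨mb, nb, rfl⟩, ⟨mc, nc, rfl⟩, ?_⟩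
  unfold lv
  module

lemma Lset_repr {v : E3} (h : v ∈ Lset) :
    ∃ ma na mb nb mc nc : ℤ, v = lv (zt ma na) (zt mb nb) (zt mc nc) := by
  obtain ⟨a, b, c, ⟨ma, na, ha⟩, ⟨mb, nb, hb⟩, ⟨mc, nc, hc⟩, h2⟩ := h
  refine ⟨ma, na, mb, nb, mc, nc, ?_⟩
  have hv : v = (2⁻¹ : ℝ) • ((2:ℝ) • v) := by rw [smul_smul]; norm_num
  subst ha hb hc
  rw [hv, h2]
  unfold lv zt
  module

lemma lv_apply0 (a b c : ℝ) : lv a b c 0 = a + b * (gold + 1) / 2 := by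
  simp [lv, PiLp.add_apply, PiLp.smul_apply, smul_eq_mul]
  try ring

lemma lv_apply1 (a b c : ℝ) : lv a b c 1 = b * gold / 2 := by
  simp [lv, PiLp.add_apply, PiLp.smul_apply, smul_eq_mul]
  try ring

lemma lv_apply2 (a b c : ℝ) : lv a b c 2 = b / 2 + c := by
  simp [lv, PiLp.add_apply, PiLp.smul_apply, smul_eq_mul]
  try ring

lemma lvS_apply0 (a b c : ℝ) : lvS a b c 0 = a + b * (2 - gold) / 2 := by
  simp [lvS, PiLp.add_apply, PiLp.smul_apply, smul_eq_mul]
  try ring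

lemma lvS_apply1 (a b c : ℝ) : lvS a b c 1 = b * (1 - gold) / 2 := by
  simp [lvS, PiLp.add_apply, PiLp.smul_apply, smul_eq_mul]
  try ring

lemma lvS_apply2 (a b c : ℝ) : lvS a b c 2 = b / 2 + c := by
  simp [lvS, PiLp.add_apply, PiLp.smul_apply, smul_eq_mul]
  try ring

lemma starMap_lv (ma na mb nb mc nc : ℤ) :
    starMap (lv (zt ma na) (zt mb nb) (zt mc nc)) = lvS (zs ma na) (zs mb nb) (zs mc nc) := by
  have hg := gold_sq'
  ext i
  fin_cases i
  · show conjTau (lv (zt ma na) (zt mb nb) (zt mc nc) 0) = lvS (zs ma na) (zs mb nb) (zs mc nc) 0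
    rw [lv_apply0, lvS_apply0]
    have h0 : zt ma na + zt mb nb * (gold + 1) / 2 =
        ((ma + (mb + nb) / 2 : ℚ) : ℝ) + ((na + (mb + 2*nb) / 2 : ℚ) : ℝ) * gold := by
      unfold zt; push_cast; linear_combination ((nb:ℝ)/2) * hg
    rw [h0, conjTau_eq]
    unfold zs; push_cast; linear_combination (-(nb:ℝ)/2) * hg
  · show conjTau (lv (zt ma na) (zt mb nb) (zt mc nc) 1) = lvS (zs ma na) (zs mb nb) (zs mc nc) 1
    rw [lv_apply1, lvS_apply1]
    have h0 : zt mb nb * gold / 2 =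
        ((nb / 2 : ℚ) : ℝ) + (((mb + nb) / 2 : ℚ) : ℝ) * gold := by
      unfold zt; push_cast; linear_combination ((nb:ℝ)/2) * hg
    rw [h0, conjTau_eq]
    unfold zs; push_cast; linear_combination (-(nb:ℝ)/2) * hg
  · show conjTau (lv (zt ma na) (zt mb nb) (zt mc nc) 2) = lvS (zs ma na) (zs mb nb) (zs mc nc) 2
    rw [lv_apply2, lvS_apply2]
    have h0 : zt mb nb / 2 + zt mc nc =
        ((mb / 2 + mc : ℚ) : ℝ) + ((nb / 2 + nc : ℚ) : ℝ) * gold := by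
      unfold zt; push_cast; ring
    rw [h0, conjTau_eq]
    unfold zs; push_cast; ring

-- ============ arithmetic on coefficients ============

lemma zt_add (m n m' n' : ℤ) : zt m n + zt m' n' = zt (m + m') (n + n') := by
  unfold zt; push_cast; ring

lemma zt_sub (m n m' n' : ℤ) : zt m n - zt m' n' = zt (m - m') (n - n') := by
  unfold zt; push_cast; ring

lemma zs_add (m n m' n' : ℤ) : zs m n + zs m' n' = zs (m + m') (n + n') := by
  unfold zs; push_cast; ring

lemma zt_mul (m n p q : ℤ) :
    zt m n * zt p q = zt (m*p + n*q) (m*q + n*p + n*q) := by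
  unfold zt; push_cast; linear_combination ((n:ℝ) * q) * gold_sq'

lemma zs_mul (m n p q : ℤ) :
    zs m n * zs p q = zs (m*p + n*q) (m*q + n*p + n*q) := by
  unfold zs; push_cast; linear_combination ((n:ℝ) * q) * gold_sq'

def fibp : ℕ → ℤ × ℤ
  | 0 => (1, 0)
  | k+1 => ((fibp k).2, (fibp k).1 + (fibp k).2)

lemma zt_pow (k : ℕ) : gold ^ k = zt (fibp k).1 (fibp k).2 := by
  induction k with
  | zero => simp [fibp, zt]
  | succ k ih =>
      rw [pow_succ, ih, fibp]
      have : zt (fibp k).1 (fibp k).2 * gold = zt (fibp k).1 (fibp k).2 * zt 0 1 := by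
        unfold zt; push_cast; ring
      rw [this, zt_mul]
      norm_num

lemma zs_pow (k : ℕ) : (1 - gold) ^ k = zs (fibp k).1 (fibp k).2 := by
  induction k with
  | zero => simp [fibp, zs]
  | succ k ih =>
      rw [pow_succ, ih, fibp]
      have : zs (fibp k).1 (fibp k).2 * (1 - gold) = zs (fibp k).1 (fibp k).2 * zs 0 1 := by
        unfold zs; push_cast; ring
      rw [this, zs_mul]
      norm_num

lemma lv_add (a b c a' b' c' : ℝ) :
    lv a b c + lv a' b' c' = lv (a + a') (b + b') (c + c') := by
  unfold lv; module

lemma lv_sub (a b c a' b' c' : ℝ) :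
    lv a b c - lv a' b' c' = lv (a - a') (b - b') (c - c') := by
  unfold lv; module

lemma lvS_add (a b c a' b' c' : ℝ) :
    lvS a b c + lvS a' b' c' = lvS (a + a') (b + b') (c + c') := by
  unfold lvS; module

lemma lv_smul (r a b c : ℝ) : r • lv a b c = lv (r * a) (r * b) (r * c) := by
  unfold lv; module

lemma lvS_smul (r a b c : ℝ) : r • lvS a b c = lvS (r * a) (r * b) (r * c) := by
  unfold lvS; module

-- ============ metric helper ============

lemma dist_lt3 (x y : E3) {δ : ℝ} (hδ : 0 < δ)
    (h0 : |x 0 - y 0| < δ) (h1 : |x 1 - y 1| < δ) (h2 : |x 2 - y 2| < δ) :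
    dist x y < 3 * δ := by
  rw [EuclideanSpace.dist_eq, Real.sqrt_lt' (by linarith : 0 < 3 * δ)]
  rw [Fin.sum_univ_three]
  have e0 : dist (x 0) (y 0) = |x 0 - y 0| := Real.dist_eq _ _
  have e1 : dist (x 1) (y 1) = |x 1 - y 1| := Real.dist_eq _ _
  have e2 : dist (x 2) (y 2) = |x 2 - y 2| := Real.dist_eq _ _
  rw [e0, e1, e2]
  have a0 := abs_nonneg (x 0 - y 0)
  have a1 := abs_nonneg (x 1 - y 1)
  have a2 := abs_nonneg (x 2 - y 2)
  nlinarith [sq_abs (x 0 - y 0), sq_abs (x 1 - y 1), sq_abs (x 2 - y 2)]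

lemma irr_sigma : Irrational (1 - gold) := by
  have := gold_irr.intCast_sub 1
  simpa using this

lemma dense_zs (x ε : ℝ) (hε : 0 < ε) : ∃ m n : ℤ, |zs m n - x| < ε := by
  obtain ⟨m, n, h⟩ := dense_pair irr_sigma x ε hε
  exact ⟨m, n, h⟩

lemma pair_scale (m n : ℤ) (k : ℕ) :
    ∃ p q : ℤ, zt p q = gold ^ k * zt m n ∧ zs p q = (1 - gold) ^ k * zs m n := by
  refine ⟨(fibp k).1 * m + (fibp k).2 * n,
    (fibp k).1 * n + (fibp k).2 * m + (fibp k).2 * n, ?_, ?_⟩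
  · rw [zt_pow, zt_mul]
  · rw [zs_pow, zs_mul]


set_option maxHeartbeats 1000000 in
/-- Proposition 3.20 of [H2]: for every F-type icosahedral model set
Λ(t,W), the Λ-directions coincide with the L-directions. -/
theorem modelSet_directions_eq_L_directions :
    ∀ (t : E3) (W : Set E3), IsWindow W →
      ∀ u : E3, u ∈ Metric.sphere (0 : E3) 1 →
        ((∃ x ∈ modelSet t W, ∃ y ∈ modelSet t W, x ≠ y ∧ ∃ c : ℝ, u = c • (x - y)) ↔
          (∃ v ∈ Lset, v ≠ 0 ∧ ∃ c : ℝ, u = c • v)) := by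
  intro t W hW u _
  constructor
  · rintro ⟨x, ⟨α, hα, hαW, rfl⟩, y, ⟨β, hβ, hβW, rfl⟩, hxy, c, hu⟩
    refine ⟨α - β, ?_, ?_, c, ?_⟩
    · obtain ⟨ma, na, mb, nb, mc, nc, rfl⟩ := Lset_repr hα
      obtain ⟨ma', na', mb', nb', mc', nc', rfl⟩ := Lset_repr hβ
      rw [lv_sub, zt_sub, zt_sub, zt_sub]
      exact lv_mem _ _ _ _ _ _
    · intro h0
      exact hxy (by rw [sub_eq_zero.mp h0])
    · rw [hu]
      congr 1
      abel
  · rintro ⟨v, hv, hv0, c, hu⟩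
    obtain ⟨w, hw⟩ := hW.1
    obtain ⟨ε, hε, hball⟩ := Metric.isOpen_iff.mp isOpen_interior w hw
    obtain ⟨ma, na, mb, nb, mc, nc, hvrep⟩ := Lset_repr hv
    set s : E3 := starMap v with hs
    have hr1 : (0:ℝ) < gold - 1 := by linarith [goldGtOne]
    have hr2 : gold - 1 < 1 := by linarith [goldLtTwo]
    have hnorm : (0:ℝ) < ‖s‖ + 1 := by positivity
    obtain ⟨k, hk⟩ :=
      exists_pow_lt_of_lt_one (show 0 < ε / (2 * (‖s‖ + 1)) by positivity) hr2
    have hgkpos : (0:ℝ) < gold ^ k := pow_pos goldPos k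
    have hk' : (gold - 1) ^ k * ‖s‖ < ε / 2 := by
      have h1 : (gold - 1) ^ k * (‖s‖ + 1) < ε / (2 * (‖s‖ + 1)) * (‖s‖ + 1) :=
        mul_lt_mul_of_pos_right hk hnorm
      have h2 : ε / (2 * (‖s‖ + 1)) * (‖s‖ + 1) = ε / 2 := by field_simp
      nlinarith [pow_pos hr1 k, norm_nonneg s]
    -- the scaled vector wk = gold^k • v
    obtain ⟨pa, qa, hpa, hpa'⟩ := pair_scale ma na k
    obtain ⟨pb, qb, hpb, hpb'⟩ := pair_scale mb nb k
    obtain ⟨pc, qc, hpc, hpc'⟩ := pair_scale mc nc k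
    set wk : E3 := lv (zt pa qa) (zt pb qb) (zt pc qc) with hwkdef
    have hwkL : wk ∈ Lset := lv_mem _ _ _ _ _ _
    have hwk : wk = gold ^ k • v := by
      rw [hwkdef, hvrep, lv_smul, hpa, hpb, hpc]
    have hstar_v : s = lvS (zs ma na) (zs mb nb) (zs mc nc) := by
      rw [hs, hvrep, starMap_lv]
    have hstar_wk : starMap wk = (1 - gold) ^ k • s := by
      rw [hwkdef, starMap_lv, hpa', hpb', hpc', hstar_v, lvS_smul]
    have hwk0 : wk ≠ 0 := by
      rw [hwk]
      exact smul_ne_zero (ne_of_gt hgkpos) hv0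
    -- choose α with starMap α close to w
    set δ : ℝ := ε / 8 with hδdef
    have hδ : 0 < δ := by positivity
    have hσne : (1 : ℝ) - gold ≠ 0 := by
      have := goldGtOne; intro h; linarith
    obtain ⟨MB, NB, hB⟩ := dense_zs (2 * w 1 / (1 - gold)) δ hδ
    obtain ⟨MA, NA, hA⟩ := dense_zs (w 0 - zs MB NB * (2 - gold) / 2) δ hδ
    obtain ⟨MC, NC, hC⟩ := dense_zs (w 2 - zs MB NB / 2) δ hδ
    set α : E3 := lv (zt MA NA) (zt MB NB) (zt MC NC) with hαdef
    have hαL : α ∈ Lset := lv_mem _ _ _ _ _ _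
    set sα : E3 := lvS (zs MA NA) (zs MB NB) (zs MC NC) with hsαdef
    have hstar_α : starMap α = sα := by rw [hαdef, starMap_lv]
    have d0 : |sα 0 - w 0| < δ := by
      have e : sα 0 - w 0 = zs MA NA - (w 0 - zs MB NB * (2 - gold) / 2) := by
        rw [hsαdef, lvS_apply0]; ring
      rw [e]; exact hA
    have d1 : |sα 1 - w 1| < δ := by
      have e : sα 1 - w 1 = (1 - gold) / 2 * (zs MB NB - 2 * w 1 / (1 - gold)) := by
        rw [hsαdef, lvS_apply1]
        field_simp
      rw [e, abs_mul]
      have hb1 : |(1 - gold) / 2| ≤ 1 := by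
        have habs : |(1 - gold) / 2| = (gold - 1) / 2 := by
          rw [abs_of_neg (by linarith [goldGtOne] : (1 - gold) / 2 < 0)]; ring
        rw [habs]
        linarith [goldLtTwo]
      calc |(1 - gold) / 2| * |zs MB NB - 2 * w 1 / (1 - gold)|
          ≤ 1 * |zs MB NB - 2 * w 1 / (1 - gold)| :=
            mul_le_mul_of_nonneg_right hb1 (abs_nonneg _)
        _ = |zs MB NB - 2 * w 1 / (1 - gold)| := one_mul _
        _ < δ := hB
    have d2 : |sα 2 - w 2| < δ := by
      have e : sα 2 - w 2 = zs MC NC - (w 2 - zs MB NB / 2) := by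
        rw [hsαdef, lvS_apply2]; ring
      rw [e]; exact hC
    have hdsα : dist sα w < 3 * δ := dist_lt3 _ _ hδ d0 d1 d2
    have h3δ : 3 * δ < ε / 2 := by rw [hδdef]; linarith
    have hαW : starMap α ∈ W := by
      apply interior_subset
      apply hball
      rw [Metric.mem_ball, hstar_α]
      linarith
    -- β = α + wk
    set β : E3 := α + wk with hβdef
    have hβL : β ∈ Lset := by
      rw [hβdef, hαdef, hwkdef, lv_add, zt_add, zt_add, zt_add]
      exact lv_mem _ _ _ _ _ _
    have hstar_β : starMap β = sα + (1 - gold) ^ k • s := by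
      rw [hβdef, hαdef, hwkdef, lv_add, zt_add, zt_add, zt_add, starMap_lv,
        ← zs_add, ← zs_add, ← zs_add, ← lvS_add, ← hsαdef, ← starMap_lv, ← hwkdef,
        hstar_wk]
    have hnwk : ‖(1 - gold) ^ k • s‖ < ε / 2 := by
      rw [norm_smul, Real.norm_eq_abs, abs_pow]
      have : |1 - gold| = gold - 1 := by
        rw [abs_of_neg (by linarith [goldGtOne] : (1:ℝ) - gold < 0)]; ring
      rw [this]
      exact hk'
    have hβW : starMap β ∈ W := by
      apply interior_subset
      apply hball
      rw [Metric.mem_ball]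
      calc dist (starMap β) w ≤ dist (starMap β) sα + dist sα w := dist_triangle _ _ _
        _ < ε / 2 + ε / 2 := by
            apply add_lt_add
            · rw [hstar_β, dist_eq_norm, add_sub_cancel_left]
              exact hnwk
            · linarith
        _ = ε := by ring
    refine ⟨t + β, ⟨β, hβL, hβW, rfl⟩, t + α, ⟨α, hαL, hαW, rfl⟩, ?_, c * (gold ^ k)⁻¹, ?_⟩
    · intro h
      have hβα : β = α := by
        have := add_left_cancel h
        exact this
      apply hwk0
      have : α + wk = α := by rw [← hβdef, hβα]
      simpa using this
    · have hdiff : (t + β) - (t + α) = wk := by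
        rw [hβdef]; abel
      rw [hdiff, hwk, smul_smul, hu]
      congr 1
      field_simp


end
end

section
/- The module M_F has full icosahedral symmetry: for every rotation R ∈ SO(3) that maps the vertex set V := {(0,±1,±τ), (±τ,0,±1), (±1,±τ,0)} of the regular icosahedron centred at the origin onto itself, one has R(M_F) = M_F. -/
noncomputable section

open Set

/-- The vertex set of the regular icosahedron centred at the origin, with the
coordinate axes as 2-fold axes. -/
def icoVertices : Set E3 :=
  {(WithLp.toLp 2 ![0, 1, gold] : E3), (WithLp.toLp 2 ![0, 1, -gold] : E3), (WithLp.toLp 2 ![0, -1, gold] : E3),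
   (WithLp.toLp 2 ![0, -1, -gold] : E3), (WithLp.toLp 2 ![gold, 0, 1] : E3), (WithLp.toLp 2 ![gold, 0, -1] : E3),
   (WithLp.toLp 2 ![-gold, 0, 1] : E3), (WithLp.toLp 2 ![-gold, 0, -1] : E3), (WithLp.toLp 2 ![1, gold, 0] : E3),
   (WithLp.toLp 2 ![1, -gold, 0] : E3), (WithLp.toLp 2 ![-1, gold, 0] : E3), (WithLp.toLp 2 ![-1, -gold, 0] : E3)}

lemma goldSq : gold * gold = gold + 1 := by
  have h5 : Real.sqrt 5 * Real.sqrt 5 = 5 := Real.mul_self_sqrt (by norm_num)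
  unfold gold; linear_combination h5 / 4

lemma compX0 (a b c : ℝ) :
    (a • (WithLp.toLp 2 ![2, 0, 0] : E3) + b • (WithLp.toLp 2 ![gold + 1, gold, 1] : E3) + c • (WithLp.toLp 2 ![0, 0, 2] : E3)) 0
      = a * 2 + b * (gold + 1) := by
  simp [PiLp.add_apply, PiLp.smul_apply, smul_eq_mul]

lemma compX1 (a b c : ℝ) :
    (a • (WithLp.toLp 2 ![2, 0, 0] : E3) + b • (WithLp.toLp 2 ![gold + 1, gold, 1] : E3) + c • (WithLp.toLp 2 ![0, 0, 2] : E3)) 1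
      = b * gold := by
  simp [PiLp.add_apply, PiLp.smul_apply, smul_eq_mul]

lemma compX2 (a b c : ℝ) :
    (a • (WithLp.toLp 2 ![2, 0, 0] : E3) + b • (WithLp.toLp 2 ![gold + 1, gold, 1] : E3) + c • (WithLp.toLp 2 ![0, 0, 2] : E3)) 2
      = b + c * 2 := by
  simp [PiLp.add_apply, PiLp.smul_apply, smul_eq_mul]

lemma E3_ext (x y : E3) (h0 : x 0 = y 0) (h1 : x 1 = y 1) (h2 : x 2 = y 2) : x = y := by
  ext i; fin_cases i <;> assumption

/-- The dual characterization of `MF`: it consists exactly of those vectors whose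
inner product with every icosahedron vertex lies in `2ℤ[τ]`. -/
lemma MF_eq_dual : MF = {X : E3 | ∀ v ∈ icoVertices,
    ∃ m n : ℤ, X 0 * v 0 + X 1 * v 1 + X 2 * v 2 = 2 * ((m : ℝ) + (n : ℝ) * gold)} := by
  have hg := goldSq
  ext X
  simp only [Set.mem_setOf_eq]
  constructor
  · intro hX
    simp only [MF, Ztau, Set.mem_setOf_eq] at hX
    obtain ⟨a, b, c, ⟨a1, a2, rfl⟩, ⟨b1, b2, rfl⟩, ⟨c1, c2, rfl⟩, rfl⟩ := hX
    intro v hv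
    simp only [icoVertices, Set.mem_insert_iff, Set.mem_singleton_iff] at hv
    simp only [compX0, compX1, compX2]
    rcases hv with rfl | rfl | rfl | rfl | rfl | rfl | rfl | rfl | rfl | rfl | rfl | rfl <;>
      simp only [PiLp.toLp_apply, Matrix.cons_val_zero, Matrix.cons_val_one, Matrix.cons_val_two,
        Matrix.tail_cons, Matrix.head_cons]
    · refine ⟨b2 + c2, b1 + b2 + c1 + c2, ?_⟩
      push_cast
      linear_combination (2 * (b2 : ℝ) + 2 * c2) * hg
    · refine ⟨-c2, -c1 - c2, ?_⟩
      push_cast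
      linear_combination (-2 * (c2 : ℝ)) * hg
    · refine ⟨c2, c1 + c2, ?_⟩
      push_cast
      linear_combination (2 * (c2 : ℝ)) * hg
    · refine ⟨-b2 - c2, -b1 - b2 - c1 - c2, ?_⟩
      push_cast
      linear_combination (-2 * (b2 : ℝ) - 2 * c2) * hg
    · refine ⟨a2 + b1 + b2 + c1, a1 + a2 + b1 + 2 * b2 + c2, ?_⟩
      push_cast
      linear_combination ((2 * (a2 : ℝ) + b1 + 2 * b2) + b2 * gold) * hg
    · refine ⟨a2 + b2 - c1, a1 + a2 + b1 + b2 - c2, ?_⟩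
      push_cast
      linear_combination ((2 * (a2 : ℝ) + b1 + 2 * b2) + b2 * gold) * hg
    · refine ⟨-a2 - b2 + c1, -a1 - a2 - b1 - b2 + c2, ?_⟩
      push_cast
      linear_combination (-(2 * (a2 : ℝ) + b1 + 2 * b2) - b2 * gold) * hg
    · refine ⟨-a2 - b1 - b2 - c1, -a1 - a2 - b1 - 2 * b2 - c2, ?_⟩
      push_cast
      linear_combination (-(2 * (a2 : ℝ) + b1 + 2 * b2) - b2 * gold) * hg
    · refine ⟨a1 + b1 + b2, a2 + b1 + 2 * b2, ?_⟩
      push_cast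
      linear_combination (((b1 : ℝ) + 2 * b2) + b2 * gold) * hg
    · refine ⟨a1, a2, ?_⟩
      push_cast
      linear_combination (-(b1 : ℝ) - b2 * gold) * hg
    · refine ⟨-a1, -a2, ?_⟩
      push_cast
      linear_combination ((b1 : ℝ) + b2 * gold) * hg
    · refine ⟨-a1 - b1 - b2, -a2 - b1 - 2 * b2, ?_⟩
      push_cast
      linear_combination (-((b1 : ℝ) + 2 * b2) - b2 * gold) * hg
  · intro hX
    obtain ⟨s1, s2, hs⟩ := hX (WithLp.toLp 2 ![0, 1, gold] : E3) (by simp [icoVertices])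
    obtain ⟨t1, t2, ht⟩ := hX (WithLp.toLp 2 ![0, 1, -gold] : E3) (by simp [icoVertices])
    obtain ⟨q1, q2, hq⟩ := hX (WithLp.toLp 2 ![1, -gold, 0] : E3) (by simp [icoVertices])
    simp only [PiLp.toLp_apply, Matrix.cons_val_zero, Matrix.cons_val_one, Matrix.cons_val_two,
      Matrix.tail_cons, Matrix.head_cons] at hs ht hq
    have h1 : X 1 + X 2 * gold = 2 * ((s1 : ℝ) + (s2 : ℝ) * gold) := by linear_combination hs
    have h2 : X 1 - X 2 * gold = 2 * ((t1 : ℝ) + (t2 : ℝ) * gold) := by linear_combination ht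
    have h6 : X 0 - X 1 * gold = 2 * ((q1 : ℝ) + (q2 : ℝ) * gold) := by linear_combination hq
    simp only [MF, Ztau, Set.mem_setOf_eq]
    refine ⟨(q1 : ℝ) + (q2 : ℝ) * gold,
      ((s2 + t2 - s1 - t1 : ℤ) : ℝ) + ((s1 + t1 : ℤ) : ℝ) * gold,
      ((t1 - t2 : ℤ) : ℝ) + ((-t1 : ℤ) : ℝ) * gold,
      ⟨q1, q2, rfl⟩, ⟨s2 + t2 - s1 - t1, s1 + t1, rfl⟩, ⟨t1 - t2, -t1, rfl⟩,
      E3_ext _ _ ?_ ?_ ?_⟩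
    · rw [compX0]; push_cast
      linear_combination h6 + gold / 2 * (h1 + h2) +
        ((s2 : ℝ) + t2 - s1 - t1) * hg
    · rw [compX1]; push_cast
      linear_combination h1 / 2 + h2 / 2 - ((s1 : ℝ) + t1) * hg
    · rw [compX2]; push_cast
      linear_combination (gold - 1) / 2 * (h1 - h2) + ((s2 : ℝ) - t2 - X 2) * hg

lemma dot_mulVec (R : Matrix (Fin 3) (Fin 3) ℝ) (x v : E3) :
    (R.mulVec x) 0 * v 0 + (R.mulVec x) 1 * v 1 + (R.mulVec x) 2 * v 2
      = x 0 * (R.transpose.mulVec v) 0 + x 1 * (R.transpose.mulVec v) 1 +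
        x 2 * (R.transpose.mulVec v) 2 := by
  simp [Matrix.mulVec, dotProduct, Fin.sum_univ_three, Matrix.transpose_apply]; ring

lemma step_subset (R : Matrix (Fin 3) (Fin 3) ℝ) (hO : R * R.transpose = 1)
    (hV : (fun v : E3 => (WithLp.toLp 2 (R.mulVec v) : E3)) '' icoVertices = icoVertices) :
    (fun v : E3 => (WithLp.toLp 2 (R.mulVec v) : E3)) '' MF ⊆ MF := by
  have hO' : R.transpose * R = 1 := mul_eq_one_comm.mp hO
  have hRT : ∀ v ∈ icoVertices, (WithLp.toLp 2 (R.transpose.mulVec v) : E3) ∈ icoVertices := by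
    intro v hv
    rw [← hV] at hv
    obtain ⟨w, hw, rfl⟩ := hv
    have e : (WithLp.toLp 2 (R.transpose.mulVec (WithLp.toLp 2 (R.mulVec w) : E3)) : E3) = w := by
      simp [Matrix.mulVec_mulVec, hO', Matrix.one_mulVec]
    exact Set.mem_of_eq_of_mem e hw
  rintro y ⟨x, hx, rfl⟩
  rw [MF_eq_dual] at hx ⊢
  intro v hv
  obtain ⟨m, n, hmn⟩ := hx (WithLp.toLp 2 (R.transpose.mulVec v)) (hRT v hv)
  exact ⟨m, n, by rw [WithLp.ofLp_toLp, dot_mulVec]; exact hmn⟩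

/-- M_F has full icosahedral symmetry: every rotation in SO(3)
mapping the icosahedron's vertex set onto itself maps M_F onto itself. -/
theorem MF_icosahedral_symmetry :
    ∀ R : Matrix (Fin 3) (Fin 3) ℝ, R * R.transpose = 1 → R.det = 1 →
      (fun v : E3 => (WithLp.toLp 2 (R.mulVec v) : E3)) '' icoVertices = icoVertices →
      (fun v : E3 => (WithLp.toLp 2 (R.mulVec v) : E3)) '' MF = MF := by
  intro R hO _ hV
  have hO' : R.transpose * R.transpose.transpose = 1 := by
    rw [Matrix.transpose_transpose]; exact mul_eq_one_comm.mp hO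
  have hback : ∀ w : E3, (WithLp.toLp 2 (R.mulVec (WithLp.toLp 2 (R.transpose.mulVec w) : E3)) : E3) = w := by
    intro w; simp [Matrix.mulVec_mulVec, hO, Matrix.one_mulVec]
  have hforth : ∀ w : E3, (WithLp.toLp 2 (R.transpose.mulVec (WithLp.toLp 2 (R.mulVec w) : E3)) : E3) = w := by
    intro w; simp [Matrix.mulVec_mulVec, mul_eq_one_comm.mp hO, Matrix.one_mulVec]
  have hV' : (fun v : E3 => (WithLp.toLp 2 (R.transpose.mulVec v) : E3)) '' icoVertices = icoVertices := by
    apply Set.Subset.antisymm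
    · rintro y ⟨x, hx, rfl⟩
      rw [← hV] at hx
      obtain ⟨w, hw, rfl⟩ := hx
      exact Set.mem_of_eq_of_mem (hforth w) hw
    · intro w hw
      have : (WithLp.toLp 2 (R.mulVec w) : E3) ∈ icoVertices := hV ▸ Set.mem_image_of_mem _ hw
      exact ⟨WithLp.toLp 2 (R.mulVec w), this, hforth w⟩
  apply Set.Subset.antisymm (step_subset R hO hV)
  intro x hx
  have hx' : (WithLp.toLp 2 (R.transpose.mulVec x) : E3) ∈ MF :=
    step_subset R.transpose hO' hV' ⟨x, hx, rfl⟩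
  exact ⟨WithLp.toLp 2 (R.transpose.mulVec x), hx', hback x⟩

end
end
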